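/- Suppose z ∈ ℂ∖{0} is such that the nonnegative matrix series N1(|z|), G1(|z|) and R1(|z|) converge entrywise, and define H1(z) = A_{*,0}(z) + A_{*,1}(z)·N1(z)·A_{*,−1}(z). Then (I − H1(z)) · N1(z) = I. -/

import Mathlib

/-!
Split an excursion (a walk from level `0` back to `0` that never goes below `0`) at its first
step: after a level step an excursion remains, after an up step a walk from `0` to `-1` that
stays above `-1`; let `P⁽ⁿ⁾` be the sum over such walks. Such a walk splits at its first visit
to `-1` into an excursion, a down step, and another excursion. Hence
`Q⁽ⁿ⁺¹⁾ = A_{*,0} Q⁽ⁿ⁾ + A_{*,1} P⁽ⁿ⁾` and `P⁽ⁿ⁺¹⁾ = Σ_{a+b=n} Q⁽ᵃ⁾ A_{*,-1} Q⁽ᵇ⁾`.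
Since `|Q⁽ⁿ⁾(z)| ≤ Q⁽ⁿ⁾(|z|)` entrywise, all series converge absolutely, and summing (with a
Cauchy product for the last term) gives `N1 = I + A_{*,0} N1 + A_{*,1} N1 A_{*,-1} N1`.
-/

namespace QBDSeries

/-- The index set `H = {-1, 0, 1}`. -/
def Hs : Finset ℤ := {-1, 0, 1}

/-- Partial sum of the first `k` entries of a sequence `σ : Fin n → ℤ`. -/
def psum {n : ℕ} (σ : Fin n → ℤ) (k : ℕ) : ℤ :=
  ∑ i ∈ Finset.univ.filter (fun i : Fin n => (i : ℕ) < k), σ i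

/-- Condition defining the index set `𝓘_n`. -/
def condQ (n : ℕ) (σ : Fin n → ℤ) : Prop :=
  (∀ k : ℕ, 1 ≤ k → k ≤ n - 1 → 0 ≤ psum σ k) ∧ psum σ n = 0

/-- Condition defining the index set `𝓘_{D,n}`. -/
def condD (n : ℕ) (σ : Fin n → ℤ) : Prop :=
  (∀ k : ℕ, 1 ≤ k → k ≤ n - 1 → 0 ≤ psum σ k) ∧ psum σ n = -1

/-- Condition defining the index set `𝓘_{U,n}`. -/
def condU (n : ℕ) (σ : Fin n → ℤ) : Prop :=
  (∀ k : ℕ, 1 ≤ k → k ≤ n - 1 → 1 ≤ psum σ k) ∧ psum σ n = 1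

/-- `A_{*,i}(z) = Σ_{j∈H} A_{j,i} z^j` over `ℂ`. -/
noncomputable def AstarC (s0 : ℕ) (A : ℤ → ℤ → Matrix (Fin s0) (Fin s0) ℝ) (z : ℂ) (i : ℤ) :
    Matrix (Fin s0) (Fin s0) ℂ :=
  ∑ j ∈ Hs, (z ^ j) • (A j i).map Complex.ofReal

/-- `A_{*,i}(z) = Σ_{j∈H} A_{j,i} z^j` over `ℝ`. -/
noncomputable def AstarR (s0 : ℕ) (A : ℤ → ℤ → Matrix (Fin s0) (Fin s0) ℝ) (z : ℝ) (i : ℤ) :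
    Matrix (Fin s0) (Fin s0) ℝ :=
  ∑ j ∈ Hs, (z ^ j) • A j i

open Classical in
/-- `Σ_{σ ∈ cond} A_{*,σ1}(z)⋯A_{*,σn}(z)` over `ℂ`. -/
noncomputable def pathSumC (s0 : ℕ) (A : ℤ → ℤ → Matrix (Fin s0) (Fin s0) ℝ) (z : ℂ) (n : ℕ)
    (cond : (Fin n → ℤ) → Prop) : Matrix (Fin s0) (Fin s0) ℂ :=
  ∑ σ : Fin n → {x : ℤ // x ∈ Hs},
    if cond (fun k => (σ k : ℤ)) then (List.ofFn fun k : Fin n => AstarC s0 A z (σ k : ℤ)).prod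
    else 0

open Classical in
/-- `Σ_{σ ∈ cond} A_{*,σ1}(z)⋯A_{*,σn}(z)` over `ℝ`. -/
noncomputable def pathSumR (s0 : ℕ) (A : ℤ → ℤ → Matrix (Fin s0) (Fin s0) ℝ) (z : ℝ) (n : ℕ)
    (cond : (Fin n → ℤ) → Prop) : Matrix (Fin s0) (Fin s0) ℝ :=
  ∑ σ : Fin n → {x : ℤ // x ∈ Hs},
    if cond (fun k => (σ k : ℤ)) then (List.ofFn fun k : Fin n => AstarR s0 A z (σ k : ℤ)).prod
    else 0

/-- `Q^{(n)}(z)` (complex); `Q^{(0)}(z) = I`. -/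
noncomputable def QmatC (s0 : ℕ) (A : ℤ → ℤ → Matrix (Fin s0) (Fin s0) ℝ) (z : ℂ) (n : ℕ) :
    Matrix (Fin s0) (Fin s0) ℂ := pathSumC s0 A z n (condQ n)

/-- `D^{(n)}(z)` (complex); it vanishes for `n = 0`. -/
noncomputable def DmatC (s0 : ℕ) (A : ℤ → ℤ → Matrix (Fin s0) (Fin s0) ℝ) (z : ℂ) (n : ℕ) :
    Matrix (Fin s0) (Fin s0) ℂ := pathSumC s0 A z n (condD n)

/-- `U^{(n)}(z)` (complex); it vanishes for `n = 0`. -/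
noncomputable def UmatC (s0 : ℕ) (A : ℤ → ℤ → Matrix (Fin s0) (Fin s0) ℝ) (z : ℂ) (n : ℕ) :
    Matrix (Fin s0) (Fin s0) ℂ := pathSumC s0 A z n (condU n)

/-- `Q^{(n)}(z)` (real). -/
noncomputable def QmatR (s0 : ℕ) (A : ℤ → ℤ → Matrix (Fin s0) (Fin s0) ℝ) (z : ℝ) (n : ℕ) :
    Matrix (Fin s0) (Fin s0) ℝ := pathSumR s0 A z n (condQ n)

/-- `D^{(n)}(z)` (real). -/
noncomputable def DmatR (s0 : ℕ) (A : ℤ → ℤ → Matrix (Fin s0) (Fin s0) ℝ) (z : ℝ) (n : ℕ) :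
    Matrix (Fin s0) (Fin s0) ℝ := pathSumR s0 A z n (condD n)

/-- `U^{(n)}(z)` (real). -/
noncomputable def UmatR (s0 : ℕ) (A : ℤ → ℤ → Matrix (Fin s0) (Fin s0) ℝ) (z : ℝ) (n : ℕ) :
    Matrix (Fin s0) (Fin s0) ℝ := pathSumR s0 A z n (condU n)

/-- `N1(z) = Σ_{n≥0} Q^{(n)}(z)`, entrywise (complex). -/
noncomputable def N1C (s0 : ℕ) (A : ℤ → ℤ → Matrix (Fin s0) (Fin s0) ℝ) (z : ℂ) :
    Matrix (Fin s0) (Fin s0) ℂ := Matrix.of fun i j => ∑' n : ℕ, QmatC s0 A z n i j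

/-- `G1(z) = Σ_{n≥1} D^{(n)}(z)`, entrywise (complex). -/
noncomputable def G1C (s0 : ℕ) (A : ℤ → ℤ → Matrix (Fin s0) (Fin s0) ℝ) (z : ℂ) :
    Matrix (Fin s0) (Fin s0) ℂ := Matrix.of fun i j => ∑' n : ℕ, DmatC s0 A z n i j

/-- `R1(z) = Σ_{n≥1} U^{(n)}(z)`, entrywise (complex). -/
noncomputable def R1C (s0 : ℕ) (A : ℤ → ℤ → Matrix (Fin s0) (Fin s0) ℝ) (z : ℂ) :
    Matrix (Fin s0) (Fin s0) ℂ := Matrix.of fun i j => ∑' n : ℕ, UmatC s0 A z n i j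

/-- `N1(z)` (real). -/
noncomputable def N1R (s0 : ℕ) (A : ℤ → ℤ → Matrix (Fin s0) (Fin s0) ℝ) (z : ℝ) :
    Matrix (Fin s0) (Fin s0) ℝ := Matrix.of fun i j => ∑' n : ℕ, QmatR s0 A z n i j

/-- `G1(z)` (real). -/
noncomputable def G1R (s0 : ℕ) (A : ℤ → ℤ → Matrix (Fin s0) (Fin s0) ℝ) (z : ℝ) :
    Matrix (Fin s0) (Fin s0) ℝ := Matrix.of fun i j => ∑' n : ℕ, DmatR s0 A z n i j

/-- `R1(z)` (real). -/
noncomputable def R1R (s0 : ℕ) (A : ℤ → ℤ → Matrix (Fin s0) (Fin s0) ℝ) (z : ℝ) :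
    Matrix (Fin s0) (Fin s0) ℝ := Matrix.of fun i j => ∑' n : ℕ, UmatR s0 A z n i j

/-- `C(z,w) = Σ_{i,j∈H} A_{i,j} z^i w^j` over `ℂ`. -/
noncomputable def CmatC (s0 : ℕ) (A : ℤ → ℤ → Matrix (Fin s0) (Fin s0) ℝ) (z w : ℂ) :
    Matrix (Fin s0) (Fin s0) ℂ :=
  ∑ i ∈ Hs, ∑ j ∈ Hs, (z ^ i * w ^ j) • (A i j).map Complex.ofReal

/-- `H1(z) = A_{*,0}(z) + A_{*,1}(z) N1(z) A_{*,-1}(z)` (complex). -/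
noncomputable def H1C (s0 : ℕ) (A : ℤ → ℤ → Matrix (Fin s0) (Fin s0) ℝ) (z : ℂ) :
    Matrix (Fin s0) (Fin s0) ℂ :=
  AstarC s0 A z 0 + AstarC s0 A z 1 * N1C s0 A z * AstarC s0 A z (-1)

/-- A matrix with row sums one and nonnegative entries. -/
def IsStochastic {n : ℕ} (M : Matrix (Fin n) (Fin n) ℝ) : Prop :=
  (∀ i j, 0 ≤ M i j) ∧ ∀ i, ∑ j, M i j = 1

end QBDSeries

theorem Fin.comp_append {α β : Type*} {m n : ℕ} (g : α → β) (u : Fin m → α) (v : Fin n → α) :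
    (fun i => g (Fin.append u v i)) = Fin.append (fun i => g (u i)) (fun i => g (v i)) := by
  funext i
  refine Fin.addCases (fun i => ?_) (fun i => ?_) i <;> simp

theorem Matrix.norm_list_prod_ofFn_apply_le {R m : Type*} [NormedRing R] [NormOneClass R]
    [Fintype m] [DecidableEq m] :
    ∀ {n : ℕ} (M : Fin n → Matrix m m R) (B : Fin n → Matrix m m ℝ),
      (∀ k i j, ‖M k i j‖ ≤ B k i j) → ∀ i j, ‖(List.ofFn M).prod i j‖ ≤ (List.ofFn B).prod i j
  | 0, _, _, _, i, j => by
    by_cases hij : i = j <;> simp [hij]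
  | n + 1, M, B, h, i, j => by
    simp only [List.ofFn_succ, List.prod_cons, Matrix.mul_apply]
    refine (norm_sum_le _ _).trans (Finset.sum_le_sum fun p _ => ?_)
    exact (norm_mul_le _ _).trans <| mul_le_mul (h 0 i p)
      (Matrix.norm_list_prod_ofFn_apply_le _ _ (fun k => h k.succ) p j) (norm_nonneg _)
      ((norm_nonneg _).trans (h 0 i p))

open Finset in
theorem HasSum.sum_antidiagonal_mul_of_summable_norm {R : Type*} [NormedRing R] {f g : ℕ → R}
    {a b : R} (hf : HasSum f a) (hg : HasSum g b) (hf' : Summable fun n => ‖f n‖)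
    (hg' : Summable fun n => ‖g n‖) :
    HasSum (fun n => ∑ kl ∈ antidiagonal n, f kl.1 * g kl.2) (a * b) := by
  have h := (summable_sum_mul_antidiagonal_of_summable_norm' hf' hf.summable hg'
    hg.summable).hasSum
  rwa [← tsum_mul_tsum_eq_tsum_sum_antidiagonal_of_summable_norm' hf' hf.summable hg' hg.summable,
    hf.tsum_eq, hg.tsum_eq] at h

section LinftyOp

attribute [local instance] Matrix.linftyOpSeminormedAddCommGroup

theorem Matrix.linfty_opNorm_le_sum_norm {m n α : Type*} [Fintype m] [Fintype n]
    [SeminormedAddCommGroup α] (M : Matrix m n α) : ‖M‖ ≤ ∑ i, ∑ j, ‖M i j‖ := by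
  have h : ‖M‖₊ ≤ ∑ i, ∑ j, ‖M i j‖₊ := by
    rw [Matrix.linfty_opNNNorm_def]
    exact Finset.sup_le fun i hi =>
      Finset.single_le_sum (f := fun i => ∑ j, ‖M i j‖₊) (fun _ _ => zero_le) hi
  simpa only [← coe_nnnorm, ← NNReal.coe_sum, NNReal.coe_le_coe] using h

end LinftyOp

namespace QBDSeries

open Finset

section Walks

variable {n a b : ℕ}

theorem psum_eq_sum_take (σ : Fin n → ℤ) (k : ℕ) : psum σ k = ((List.ofFn σ).take k).sum :=
  (List.sum_take_ofFn σ k).symm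

@[simp]
theorem psum_zero (σ : Fin n → ℤ) : psum σ 0 = 0 := by
  simp [psum_eq_sum_take]

theorem psum_cons (x : ℤ) (τ : Fin n → ℤ) (k : ℕ) :
    psum (Fin.cons x τ : Fin (n + 1) → ℤ) (k + 1) = x + psum τ k := by
  simp [psum_eq_sum_take, List.ofFn_succ]

theorem psum_succ_eq_head_add_tail (σ : Fin (n + 1) → ℤ) (k : ℕ) :
    psum σ (k + 1) = σ 0 + psum (Fin.tail σ) k := by
  conv_lhs => rw [← Fin.cons_self_tail σ]
  exact psum_cons _ _ _

theorem psum_append_of_le (σ₁ : Fin a → ℤ) (σ₂ : Fin b → ℤ) {k : ℕ} (hk : k ≤ a) :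
    psum (Fin.append σ₁ σ₂) k = psum σ₁ k := by
  rw [psum_eq_sum_take, List.ofFn_fin_append, List.take_append_of_le_length (by simpa using hk),
    psum_eq_sum_take]

theorem psum_append_add (σ₁ : Fin a → ℤ) (σ₂ : Fin b → ℤ) (k : ℕ) :
    psum (Fin.append σ₁ σ₂) (a + k) = psum σ₁ a + psum σ₂ k := by
  have h := List.take_length_add_append k (l₁ := List.ofFn σ₁) (l₂ := List.ofFn σ₂)
  rw [List.length_ofFn] at h
  rw [psum_eq_sum_take, List.ofFn_fin_append, h, List.sum_append, psum_eq_sum_take σ₂,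
    psum_eq_sum_take σ₁, List.take_of_length_le (l := List.ofFn σ₁) (by simp)]

def StaysAboveEndsAt (m : ℤ) (σ : Fin n → ℤ) : Prop :=
  (∀ k ≤ n, m ≤ psum σ k) ∧ psum σ n = m

theorem condQ_iff_staysAboveEndsAt (σ : Fin n → ℤ) : condQ n σ ↔ StaysAboveEndsAt 0 σ := by
  refine ⟨fun ⟨hpos, hend⟩ => ⟨fun k hk => ?_, hend⟩, fun ⟨hpos, hend⟩ =>
    ⟨fun k _ hk => hpos k (by omega), hend⟩⟩
  rcases Nat.eq_zero_or_pos k with rfl | hk0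
  · simp
  rcases hk.eq_or_lt with rfl | hlt
  · exact hend.ge
  · exact hpos k hk0 (by omega)

theorem staysAboveEndsAt_cons {m x : ℤ} {τ : Fin n → ℤ} :
    StaysAboveEndsAt m (Fin.cons x τ : Fin (n + 1) → ℤ) ↔ m ≤ 0 ∧ StaysAboveEndsAt (m - x) τ := by
  simp only [StaysAboveEndsAt, psum_cons]
  refine ⟨fun ⟨habove, hend⟩ => ⟨by simpa using habove 0 (by omega),
    fun k hk => ?_, by omega⟩, fun ⟨hm, habove, hend⟩ => ⟨fun k hk => ?_, by omega⟩⟩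
  · have := habove (k + 1) (by omega)
    rw [psum_cons] at this
    linarith
  · rcases k with _ | k
    · simpa using hm
    · rw [psum_cons]
      linarith [habove k (by omega)]

def IsFirstHitNegOne (σ : Fin n → ℤ) (t : ℕ) : Prop :=
  (∀ k < t, 0 ≤ psum σ k) ∧ psum σ t = -1

theorem IsFirstHitNegOne.unique {σ : Fin n → ℤ} {t t' : ℕ} (h : IsFirstHitNegOne σ t)
    (h' : IsFirstHitNegOne σ t') : t = t' := by
  by_contra hne
  rcases Nat.lt_or_gt_of_ne hne with hlt | hlt
  · linarith [h'.1 t hlt, h.2]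
  · linarith [h.1 t' hlt, h'.2]

theorem StaysAboveEndsAt.exists_isFirstHitNegOne {σ : Fin n → ℤ}
    (h : StaysAboveEndsAt (-1) σ) : ∃ t, 1 ≤ t ∧ t ≤ n ∧ IsFirstHitNegOne σ t := by
  classical
  have hex : ∃ t, psum σ t = -1 := ⟨n, h.2⟩
  have hle : Nat.find hex ≤ n := Nat.find_min' hex h.2
  refine ⟨Nat.find hex, ?_, hle, fun k hk => ?_, Nat.find_spec hex⟩
  · by_contra! h0
    have := Nat.find_spec hex
    simp_all
  · have hne : psum σ k ≠ -1 := Nat.find_min hex hk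
    have := h.1 k (by omega)
    omega

theorem staysAboveEndsAt_append_iff (σ₁ : Fin a → ℤ) (σ₂ : Fin (b + 1) → ℤ) (h : -1 ≤ σ₂ 0) :
    StaysAboveEndsAt (-1) (Fin.append σ₁ σ₂) ∧ IsFirstHitNegOne (Fin.append σ₁ σ₂) (a + 1) ↔
      StaysAboveEndsAt 0 σ₁ ∧ σ₂ 0 = -1 ∧ StaysAboveEndsAt 0 (Fin.tail σ₂) := by
  have hleft (k : ℕ) (hk : k ≤ a) := psum_append_of_le σ₁ σ₂ hk
  have hright (k : ℕ) : psum (Fin.append σ₁ σ₂) (a + (k + 1)) =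
      psum σ₁ a + σ₂ 0 + psum (Fin.tail σ₂) k := by
    rw [psum_append_add, psum_succ_eq_head_add_tail, add_assoc]
  unfold StaysAboveEndsAt IsFirstHitNegOne
  constructor
  · rintro ⟨⟨habove, hend⟩, hpos, hhit⟩
    have hσ₁ (k : ℕ) (hk : k ≤ a) : 0 ≤ psum σ₁ k := hleft k hk ▸ hpos k (by omega)
    replace hhit : psum σ₁ a + σ₂ 0 = -1 := by simpa [hhit] using (hright 0).symm
    have hsum : psum σ₁ a = 0 := by linarith [hσ₁ a le_rfl]
    refine ⟨⟨hσ₁, hsum⟩, by linarith, fun k hk => ?_, ?_⟩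
    · linarith [hright k ▸ habove (a + (k + 1)) (by omega)]
    · linarith [hright b ▸ hend]
  · rintro ⟨⟨hσ₁, hsum⟩, hhead, hτ, hτend⟩
    have hwalk (k : ℕ) (hk : k ≤ a + (b + 1)) : -1 ≤ psum (Fin.append σ₁ σ₂) k := by
      rcases le_or_gt k a with hka | hka
      · linarith [hleft k hka, hσ₁ k hka]
      · obtain ⟨j, rfl⟩ : ∃ j, k = a + (j + 1) := ⟨k - a - 1, by omega⟩
        linarith [hright j, hτ j (by omega)]
    refine ⟨⟨hwalk, by linarith [hright b]⟩, fun k hk => ?_, ?_⟩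
    · linarith [hleft k (by omega), hσ₁ k (by omega)]
    · linarith [hright 0, psum_zero (Fin.tail σ₂)]

end Walks

section PathSums

variable {s0 : ℕ} {A : ℤ → ℤ → Matrix (Fin s0) (Fin s0) ℝ} {z : ℂ} {n : ℕ}

theorem pathSumC_congr {c₁ c₂ : (Fin n → ℤ) → Prop} (h : ∀ σ, c₁ σ ↔ c₂ σ) :
    pathSumC s0 A z n c₁ = pathSumC s0 A z n c₂ := by
  obtain rfl : c₁ = c₂ := funext fun σ => propext (h σ)
  rfl

theorem pathSumC_of_forall_not {cond : (Fin n → ℤ) → Prop} (h : ∀ σ, ¬cond σ) :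
    pathSumC s0 A z n cond = 0 :=
  Finset.sum_eq_zero fun _ _ => if_neg (h _)

theorem pathSumC_succ (cond : (Fin (n + 1) → ℤ) → Prop) :
    pathSumC s0 A z (n + 1) cond =
      ∑ x ∈ Hs, AstarC s0 A z x * pathSumC s0 A z n (fun τ => cond (Fin.cons x τ)) := by
  classical
  unfold pathSumC
  rw [← Finset.sum_coe_sort Hs, ← (Fin.consEquiv fun _ => Hs).sum_comp, Fintype.sum_prod_type]
  refine Fintype.sum_congr _ _ fun x => ?_
  rw [Finset.mul_sum]
  refine Fintype.sum_congr _ _ fun τ => ?_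
  have hcoe : (fun k => ((Fin.cons x τ : Fin (n + 1) → Hs) k : ℤ)) =
      Fin.cons (x : ℤ) fun k => (τ k : ℤ) :=
    Fin.comp_cons (fun t : Hs => (t : ℤ)) x τ
  simp only [Fin.consEquiv_apply, hcoe, List.ofFn_succ, Fin.cons_zero, Fin.cons_succ,
    List.prod_cons, mul_ite, mul_zero]

theorem pathSumC_head_eq {x : ℤ} (hx : x ∈ Hs) (cond : (Fin n → ℤ) → Prop) :
    pathSumC s0 A z (n + 1) (fun σ => σ 0 = x ∧ cond (Fin.tail σ)) =
      AstarC s0 A z x * pathSumC s0 A z n cond := by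
  rw [pathSumC_succ, Finset.sum_eq_single_of_mem x hx]
  · simp only [Fin.cons_zero, Fin.tail_cons, true_and]
  · intro y _ hyx
    rw [pathSumC_of_forall_not fun τ h => hyx (by simpa using h.1), mul_zero]

theorem pathSumC_append {m : ℕ} {cond : (Fin (m + n) → ℤ) → Prop} {c₁ : (Fin m → ℤ) → Prop}
    {c₂ : (Fin n → ℤ) → Prop}
    (h : ∀ (σ₁ : Fin m → Hs) (σ₂ : Fin n → Hs),
      cond (Fin.append (fun k => (σ₁ k : ℤ)) (fun k => (σ₂ k : ℤ))) ↔
        c₁ (fun k => (σ₁ k : ℤ)) ∧ c₂ (fun k => (σ₂ k : ℤ))) :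
    pathSumC s0 A z (m + n) cond = pathSumC s0 A z m c₁ * pathSumC s0 A z n c₂ := by
  classical
  unfold pathSumC
  rw [Finset.sum_mul_sum, ← Fintype.sum_prod_type', ← (Fin.appendEquiv m n).sum_comp]
  refine Fintype.sum_congr _ _ fun σ => ?_
  simp only [Fin.appendEquiv_apply, Fin.comp_append (fun t : Hs => (t : ℤ)),
    Fin.comp_append (fun t : Hs => AstarC s0 A z t), List.ofFn_fin_append, List.prod_append,
    ite_zero_mul_ite_zero, h]

theorem pathSumC_eq_sum_of_existsUnique {ι : Type*} (s : Finset ι) (p : ι → (Fin n → ℤ) → Prop)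
    {cond : (Fin n → ℤ) → Prop} (h : ∀ σ, cond σ → ∃! i, i ∈ s ∧ p i σ) :
    pathSumC s0 A z n cond = ∑ i ∈ s, pathSumC s0 A z n (fun σ => cond σ ∧ p i σ) := by
  unfold pathSumC
  rw [Finset.sum_comm]
  refine Finset.sum_congr rfl fun σ _ => ?_
  by_cases hc : cond fun k => (σ k : ℤ)
  · obtain ⟨i, ⟨hi, hpi⟩, huniq⟩ := h _ hc
    rw [Finset.sum_eq_single_of_mem i hi fun j hj hji =>
      if_neg fun hj' => hji (huniq j ⟨hj, hj'.2⟩), if_pos hc, if_pos ⟨hc, hpi⟩]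
  · rw [if_neg hc]
    exact (Finset.sum_eq_zero fun i _ => if_neg fun h' => hc h'.1).symm

end PathSums

section Recursions

variable {s0 : ℕ} {A : ℤ → ℤ → Matrix (Fin s0) (Fin s0) ℝ} {z : ℂ} {n : ℕ}

noncomputable def PmatC (s0 : ℕ) (A : ℤ → ℤ → Matrix (Fin s0) (Fin s0) ℝ) (z : ℂ) (n : ℕ) :
    Matrix (Fin s0) (Fin s0) ℂ := pathSumC s0 A z n (StaysAboveEndsAt (-1))

theorem QmatC_eq_pathSumC : QmatC s0 A z n = pathSumC s0 A z n (StaysAboveEndsAt 0) :=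
  pathSumC_congr condQ_iff_staysAboveEndsAt

theorem QmatC_zero : QmatC s0 A z 0 = 1 := by
  rw [QmatC_eq_pathSumC]
  unfold pathSumC
  rw [Fintype.sum_unique, if_pos ⟨fun k hk => by simp [Nat.le_zero.1 hk], psum_zero _⟩]
  simp

theorem PmatC_zero : PmatC s0 A z 0 = 0 :=
  pathSumC_of_forall_not fun σ h => by simpa using h.2

theorem QmatC_succ :
    QmatC s0 A z (n + 1) = AstarC s0 A z 0 * QmatC s0 A z n + AstarC s0 A z 1 * PmatC s0 A z n := by
  have hbelow : pathSumC s0 A z n (StaysAboveEndsAt 1) = 0 :=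
    pathSumC_of_forall_not fun σ h => by simpa using h.1 0 (Nat.zero_le _)
  rw [QmatC_eq_pathSumC, pathSumC_succ, QmatC_eq_pathSumC, PmatC]
  simp [Hs, staysAboveEndsAt_cons, hbelow]

theorem pathSumC_isFirstHitNegOne (a b : ℕ) :
    pathSumC s0 A z (a + (b + 1))
        (fun σ => StaysAboveEndsAt (-1) σ ∧ IsFirstHitNegOne σ (a + 1)) =
      QmatC s0 A z a * AstarC s0 A z (-1) * QmatC s0 A z b := by
  have hneg : (-1 : ℤ) ∈ Hs := by decide
  rw [mul_assoc, QmatC_eq_pathSumC, QmatC_eq_pathSumC, ← pathSumC_head_eq hneg]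
  refine pathSumC_append fun σ₁ σ₂ => staysAboveEndsAt_append_iff _ _ ?_
  have := (σ₂ 0).2
  simp only [Hs, mem_insert, mem_singleton] at this
  omega

theorem PmatC_succ :
    PmatC s0 A z (n + 1) = ∑ ab ∈ antidiagonal n,
      QmatC s0 A z ab.1 * AstarC s0 A z (-1) * QmatC s0 A z ab.2 := by
  rw [PmatC, pathSumC_eq_sum_of_existsUnique (antidiagonal n)
    (fun ab σ => IsFirstHitNegOne σ (ab.1 + 1))]
  · refine sum_congr rfl fun ⟨a, b⟩ hab => ?_
    obtain rfl : a + b = n := HasAntidiagonal.mem_antidiagonal.1 hab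
    exact pathSumC_isFirstHitNegOne a b
  · intro σ hσ
    obtain ⟨t, ht1, htn, ht⟩ := hσ.exists_isFirstHitNegOne
    refine ⟨(t - 1, n + 1 - t), ⟨HasAntidiagonal.mem_antidiagonal.2 (by omega), ?_⟩,
      fun ⟨a, b⟩ ⟨hab, ha⟩ => ?_⟩
    · rwa [Nat.sub_add_cancel ht1]
    · have := ha.unique ht
      rw [HasAntidiagonal.mem_antidiagonal] at hab
      ext <;> simp <;> omega

end Recursions

section Convergence

variable {s0 : ℕ} {A : ℤ → ℤ → Matrix (Fin s0) (Fin s0) ℝ} {z : ℂ} {n : ℕ}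

theorem norm_AstarC_apply_le (hA : ∀ i j : ℤ, ∀ k l, 0 ≤ A i j k l) (x : ℤ) (k l : Fin s0) :
    ‖AstarC s0 A z x k l‖ ≤ AstarR s0 A ‖z‖ x k l := by
  unfold AstarC AstarR
  rw [Matrix.sum_apply, Matrix.sum_apply]
  refine (norm_sum_le _ _).trans_eq (Finset.sum_congr rfl fun j _ => ?_)
  simp [norm_zpow, abs_of_nonneg (hA j x k l)]

theorem norm_pathSumC_apply_le (hA : ∀ i j : ℤ, ∀ k l, 0 ≤ A i j k l)
    (cond : (Fin n → ℤ) → Prop) (i j : Fin s0) :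
    ‖pathSumC s0 A z n cond i j‖ ≤ pathSumR s0 A ‖z‖ n cond i j := by
  unfold pathSumC pathSumR
  rw [Matrix.sum_apply, Matrix.sum_apply]
  refine (norm_sum_le _ _).trans (Finset.sum_le_sum fun σ _ => ?_)
  split_ifs
  · exact Matrix.norm_list_prod_ofFn_apply_le _ _ (fun k => norm_AstarC_apply_le hA _) i j
  · simp

theorem hasSum_QmatC (hA : ∀ i j : ℤ, ∀ k l, 0 ≤ A i j k l)
    (hN : ∀ i j, Summable fun n : ℕ => QmatR s0 A ‖z‖ n i j) :
    HasSum (QmatC s0 A z) (N1C s0 A z) :=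
  Pi.hasSum.2 fun i => Pi.hasSum.2 fun j =>
    (Summable.of_norm_bounded (hN i j) fun _ => norm_pathSumC_apply_le hA _ i j).hasSum

section CauchyProduct

-- Any submultiplicative norm would do; this one induces the product topology.
attribute [local instance] Matrix.linftyOpNormedRing

theorem summable_norm_QmatC (hA : ∀ i j : ℤ, ∀ k l, 0 ≤ A i j k l)
    (hN : ∀ i j, Summable fun n : ℕ => QmatR s0 A ‖z‖ n i j) :
    Summable fun n => ‖QmatC s0 A z n‖ :=
  (summable_sum fun i _ => summable_sum fun j _ => hN i j).of_nonneg_of_le (fun _ => norm_nonneg _)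
    fun _ => (Matrix.linfty_opNorm_le_sum_norm _).trans <| Finset.sum_le_sum fun i _ =>
      Finset.sum_le_sum fun j _ => norm_pathSumC_apply_le hA _ i j

theorem hasSum_PmatC (hA : ∀ i j : ℤ, ∀ k l, 0 ≤ A i j k l)
    (hN : ∀ i j, Summable fun n : ℕ => QmatR s0 A ‖z‖ n i j) :
    HasSum (PmatC s0 A z) (N1C s0 A z * AstarC s0 A z (-1) * N1C s0 A z) := by
  have hQ := hasSum_QmatC hA hN
  have hnorm := summable_norm_QmatC hA hN
  have hnorm' : Summable fun n => ‖QmatC s0 A z n * AstarC s0 A z (-1)‖ :=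
    (hnorm.mul_right _).of_nonneg_of_le (fun _ => norm_nonneg _) fun _ => norm_mul_le _ _
  have hcauchy := (hQ.mul_right (AstarC s0 A z (-1))).sum_antidiagonal_mul_of_summable_norm hQ
    hnorm' hnorm
  rw [← hasSum_nat_add_iff' 1]
  simp only [PmatC_succ, Finset.range_one, Finset.sum_singleton, PmatC_zero, sub_zero]
  exact hcauchy

end CauchyProduct

theorem N1C_eq_one_add (hA : ∀ i j : ℤ, ∀ k l, 0 ≤ A i j k l)
    (hN : ∀ i j, Summable fun n : ℕ => QmatR s0 A ‖z‖ n i j) :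
    N1C s0 A z = 1 + (AstarC s0 A z 0 * N1C s0 A z +
      AstarC s0 A z 1 * (N1C s0 A z * AstarC s0 A z (-1) * N1C s0 A z)) := by
  have hQ := hasSum_QmatC hA hN
  have hsucc :=
    (hQ.mul_left (AstarC s0 A z 0)).add ((hasSum_PmatC hA hN).mul_left (AstarC s0 A z 1))
  simp only [← QmatC_succ] at hsucc
  refine hQ.unique ((hasSum_nat_add_iff' 1).1 ?_)
  simpa [QmatC_zero] using hsucc

end Convergence

end QBDSeries

open QBDSeries in
theorem statement9_general
    (s0 : ℕ)
    (A : ℤ → ℤ → Matrix (Fin s0) (Fin s0) ℝ)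
    (hAnn : ∀ i j : ℤ, ∀ k l, 0 ≤ A i j k l)
    (z : ℂ)
    (hN : ∀ i j, Summable fun n : ℕ => QmatR s0 A ‖z‖ n i j) :
    (1 - H1C s0 A z) * N1C s0 A z = 1 := by
  have hN1 := N1C_eq_one_add hAnn hN
  calc (1 - H1C s0 A z) * N1C s0 A z
      = N1C s0 A z - (AstarC s0 A z 0 * N1C s0 A z +
          AstarC s0 A z 1 * (N1C s0 A z * AstarC s0 A z (-1) * N1C s0 A z)) := by
        unfold H1C
        noncomm_ring
    _ = 1 := sub_eq_iff_eq_add.2 hN1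

open QBDSeries in
/-- `(I − H1(z)) N1(z) = I` with `H1(z) = A_{*,0}(z) + A_{*,1}(z) N1(z) A_{*,-1}(z)`. -/
theorem statement9
    (s0 : ℕ) (hs0 : 1 ≤ s0)
    (A : ℤ → ℤ → Matrix (Fin s0) (Fin s0) ℝ)
    (hAsupp : ∀ i j : ℤ, ¬(i ∈ Hs ∧ j ∈ Hs) → A i j = 0)
    (hAnn : ∀ i j : ℤ, ∀ k l, 0 ≤ A i j k l)
    (hAst : IsStochastic (∑ i ∈ Hs, ∑ j ∈ Hs, A i j))
    (z : ℂ) (hz : z ≠ 0)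
    (hN : ∀ i j, Summable fun n : ℕ => QmatR s0 A ‖z‖ n i j)
    (hG : ∀ i j, Summable fun n : ℕ => DmatR s0 A ‖z‖ n i j)
    (hR : ∀ i j, Summable fun n : ℕ => UmatR s0 A ‖z‖ n i j) :
    (1 - H1C s0 A z) * N1C s0 A z = 1 :=
  statement9_general s0 A hAnn z hN
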